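/- Suppose φ' = A(x)φ has an exponential dichotomy on ℝ with constants K, μ > 0 and projections P(x), where A ∈ C(ℝ, ℂ^{n×n}) is bounded, and let g ∈ C(ℝ, ℂⁿ) be bounded. Then the function φ(x) = ∫_{−∞}^x T(x,y)P(y)g(y) dy − ∫_x^∞ T(x,y)(I−P(y))g(y) dy is the unique bounded C¹ solution of φ' = A(x)φ + g(x), and it satisfies the pointwise bound ‖φ(x)‖ ≤ K ∫_ℝ e^{−μ|x−y|} ‖g(y)‖ dy for all x ∈ ℝ. -/

import Mathlib

open MeasureTheory

/-- Operator norm of a square complex matrix, induced by the sup norm on `ℂ^n`. -/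
noncomputable def matOpNorm {n : ℕ} (M : Matrix (Fin n) (Fin n) ℂ) : ℝ :=
  ‖LinearMap.toContinuousLinearMap M.mulVecLin‖

/-!
Fix a base point `z`. The cocycle identity `T(x,y) = T(x,z) T(z,y)` writes `φ(x) = T(x,z) F(x)`,
where `F(x) = ∫_{-∞}^x T(z,y)P(y)g(y) dy - ∫_x^∞ T(z,y)(I-P(y))g(y) dy` has derivative
`F'(x) = T(z,x) g(x)`; the product rule then gives `φ' = Aφ + g`. The dichotomy estimates bound
both integrands by `K e^{-μ|x-y|} ‖g(y)‖`, which gives integrability and the pointwise bound.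
For uniqueness, the difference `δ` of two bounded solutions is an orbit `δ(x) = T(x,y) δ(y)`
(uniqueness for the linear ODE), so `‖P(x)δ(x)‖ = ‖T(x,y)P(y)δ(y)‖ ≤ K e^{-μ(x-y)} sup ‖δ‖`
tends to `0` as `y → -∞`; symmetrically `(I - P(x))δ(x) = 0` by letting `y → ∞`.
-/

open Real Set Filter Matrix Topology

section Integrals

theorem integrable_exp_neg_mul_abs {μ : ℝ} (hμ : 0 < μ) :
    Integrable fun t : ℝ => exp (-μ * |t|) := by
  rw [← integrableOn_univ, ← Iic_union_Ioi (a := 0)]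
  refine ((integrableOn_exp_mul_Iic hμ 0).congr_fun (fun t ht => ?_) measurableSet_Iic).union
    ((integrableOn_exp_mul_Ioi (neg_neg_of_pos hμ) 0).congr_fun (fun t ht => ?_) measurableSet_Ioi)
  · rw [abs_of_nonpos ht, mul_neg, neg_mul, neg_neg]
  · rw [abs_of_pos ht]

variable {E : Type*} [NormedAddCommGroup E]

theorem integrable_exp_neg_mul_abs_sub_mul_norm {g : ℝ → E} {μ C : ℝ} (hμ : 0 < μ)
    (hg : Continuous g) (hC : ∀ y, ‖g y‖ ≤ C) (x : ℝ) :
    Integrable fun y => exp (-μ * |x - y|) * ‖g y‖ := by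
  refine (((integrable_exp_neg_mul_abs hμ).comp_sub_left x).mul_const C).mono'
    (by fun_prop : Continuous _).aestronglyMeasurable (Eventually.of_forall fun y => ?_)
  rw [norm_mul, norm_norm, norm_of_nonneg (exp_pos _).le]
  exact mul_le_mul_of_nonneg_left (hC y) (exp_pos _).le

theorem integral_exp_neg_mul_abs_sub_mul_norm_le {g : ℝ → E} {μ C : ℝ} (hμ : 0 < μ)
    (hg : Continuous g) (hC : ∀ y, ‖g y‖ ≤ C) (x : ℝ) :
    ∫ y, exp (-μ * |x - y|) * ‖g y‖ ≤ C * ∫ t, exp (-μ * |t|) :=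
  calc ∫ y, exp (-μ * |x - y|) * ‖g y‖
      ≤ ∫ y, exp (-μ * |x - y|) * C :=
        integral_mono (integrable_exp_neg_mul_abs_sub_mul_norm hμ hg hC x)
          (((integrable_exp_neg_mul_abs hμ).comp_sub_left x).mul_const C)
          fun y => mul_le_mul_of_nonneg_left (hC y) (exp_pos _).le
    _ = C * ∫ t, exp (-μ * |t|) := by
        rw [integral_mul_const, integral_sub_left_eq_self (fun t => exp (-μ * |t|)), mul_comm]

variable [NormedSpace ℝ E] [CompleteSpace E]

theorem hasDerivAt_integral_Iic {f : ℝ → E} (hf : Continuous f)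
    (hfi : ∀ t, IntegrableOn f (Iic t)) (x : ℝ) :
    HasDerivAt (fun t => ∫ y in Iic t, f y) (f x) x := by
  have h : (fun t => ∫ y in Iic t, f y) = fun t => (∫ y in Iic x, f y) + ∫ y in x..t, f y :=
    funext fun t => by rw [← intervalIntegral.integral_Iic_sub_Iic (hfi x) (hfi t),
      add_sub_cancel]
  rw [h]
  exact (intervalIntegral.integral_hasDerivAt_right (hf.intervalIntegrable _ _)
    hf.aestronglyMeasurable.stronglyMeasurableAtFilter hf.continuousAt).const_add _

theorem hasDerivAt_integral_Ici {f : ℝ → E} (hf : Continuous f)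
    (hfi : ∀ t, IntegrableOn f (Ici t)) (x : ℝ) :
    HasDerivAt (fun t => ∫ y in Ici t, f y) (-f x) x := by
  have h : (fun t => ∫ y in Ici t, f y) = fun t => (∫ y in Ici x, f y) - ∫ y in x..t, f y :=
    funext fun t => by rw [← intervalIntegral.integral_Ici_sub_Ici' (hfi x) (hfi t),
      sub_sub_cancel]
  rw [h]
  exact (intervalIntegral.integral_hasDerivAt_right (hf.intervalIntegrable _ _)
    hf.aestronglyMeasurable.stronglyMeasurableAtFilter hf.continuousAt).const_sub _

end Integrals

theorem eq_zero_of_norm_le_mul_exp {E : Type*} [NormedAddCommGroup E] {v : E} {C μ : ℝ}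
    (hμ : 0 < μ) (h : ∀ t, 0 ≤ t → ‖v‖ ≤ C * exp (-μ * t)) : v = 0 := by
  have hlim : Tendsto (fun t => C * exp (-μ * t)) atTop (𝓝 0) := by
    simpa using ((tendsto_exp_atBot.comp
      (tendsto_id.const_mul_atTop_of_neg (neg_neg_of_pos hμ))).const_mul C)
  exact norm_le_zero_iff.1 (ge_of_tendsto hlim ((eventually_ge_atTop 0).mono h))

section MatrixCalculus

variable {ι R : Type*} [Fintype ι] [DecidableEq ι] [NormedCommRing R] [NormedAlgebra ℝ R]
  {M : ℝ → Matrix ι ι R}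

theorem hasDerivAt_matrix_apply_of_mulVec {M' : Matrix ι ι R} {x : ℝ}
    (hM : ∀ v, HasDerivAt (fun t => M t *ᵥ v) (M' *ᵥ v) x) (i j : ι) :
    HasDerivAt (fun t => M t i j) (M' i j) x := by
  simpa only [mulVec_single_one, col_apply, mul_one] using hasDerivAt_pi.1 (hM (Pi.single j 1)) i

theorem hasDerivAt_mulVec_of_forall {M' : Matrix ι ι R} {x : ℝ}
    (hM : ∀ v, HasDerivAt (fun t => M t *ᵥ v) (M' *ᵥ v) x) {v : ℝ → ι → R} {v' : ι → R}
    (hv : HasDerivAt v v' x) :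
    HasDerivAt (fun t => M t *ᵥ v t) (M' *ᵥ v x + M x *ᵥ v') x := by
  refine hasDerivAt_pi.2 fun i => ?_
  simp only [mulVec, dotProduct, Pi.add_apply, ← Finset.sum_add_distrib]
  exact HasDerivAt.fun_sum fun j _ =>
    (hasDerivAt_matrix_apply_of_mulVec hM i j).mul (hasDerivAt_pi.1 hv j)

theorem continuous_of_forall_hasDerivAt_mulVec {M' : ℝ → Matrix ι ι R}
    (hM : ∀ x v, HasDerivAt (fun t => M t *ᵥ v) (M' x *ᵥ v) x) : Continuous M :=
  continuous_matrix fun i j => continuous_iff_continuousAt.2 fun x =>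
    (hasDerivAt_matrix_apply_of_mulVec (hM x) i j).continuousAt

end MatrixCalculus

theorem Continuous.matrix_inverse_of_mul_eq_one {X ι 𝕜 : Type*} [TopologicalSpace X] [Fintype ι]
    [DecidableEq ι] [NormedField 𝕜] {M N : X → Matrix ι ι 𝕜} (hM : Continuous M)
    (h : ∀ s, N s * M s = 1) : Continuous N := by
  have hN : N = fun s => (M s)⁻¹ := funext fun s => (inv_eq_left_inv (h s)).symm
  rw [hN, continuous_iff_continuousAt]
  intro s
  have hdet : (M s).det ≠ 0 := right_ne_zero_of_mul_eq_one (by rw [← det_mul, h, det_one])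
  refine (continuousAt_matrix_inv _ ?_).comp hM.continuousAt
  rw [Ring.inverse_eq_inv']
  exact continuousAt_inv₀ hdet

section MatrixIntegral

variable {ι α 𝕜 : Type*} [Fintype ι] [RCLike 𝕜] [MeasurableSpace α] {μ : Measure α}
  (M : Matrix ι ι 𝕜) {f : α → ι → 𝕜}

theorem Matrix.integrable_mulVec (hf : Integrable f μ) : Integrable (fun a => M *ᵥ f a) μ :=
  (LinearMap.toContinuousLinearMap M.mulVecLin).integrable_comp hf

theorem Matrix.mulVec_integral (hf : Integrable f μ) :
    M *ᵥ ∫ a, f a ∂μ = ∫ a, M *ᵥ f a ∂μ :=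
  ((LinearMap.toContinuousLinearMap M.mulVecLin).integral_comp_comm hf).symm

end MatrixIntegral

section MatOpNorm

variable {n : ℕ}

theorem matOpNorm_nonneg (M : Matrix (Fin n) (Fin n) ℂ) : 0 ≤ matOpNorm M := norm_nonneg _

theorem norm_mulVec_le_matOpNorm (M : Matrix (Fin n) (Fin n) ℂ) (v : Fin n → ℂ) :
    ‖M *ᵥ v‖ ≤ matOpNorm M * ‖v‖ :=
  (LinearMap.toContinuousLinearMap M.mulVecLin).le_opNorm v

theorem norm_mulVec_le_of_le {M : Matrix (Fin n) (Fin n) ℂ} {v : Fin n → ℂ} {c C : ℝ}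
    (hM : matOpNorm M ≤ c) (hv : ‖v‖ ≤ C) : ‖M *ᵥ v‖ ≤ c * C :=
  (norm_mulVec_le_matOpNorm M v).trans
    (mul_le_mul hM hv (norm_nonneg v) ((matOpNorm_nonneg M).trans hM))

theorem lipschitzWith_mulVec {M : Matrix (Fin n) (Fin n) ℂ} {C : ℝ} (hM : matOpNorm M ≤ C) :
    LipschitzWith C.toNNReal (M *ᵥ ·) :=
  LipschitzWith.of_dist_le_mul fun v w => by
    rw [dist_eq_norm, dist_eq_norm, ← mulVec_sub]
    exact norm_mulVec_le_of_le (hM.trans (le_coe_toNNReal C)) le_rfl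

end MatOpNorm

variable {n : ℕ} {A : ℝ → Matrix (Fin n) (Fin n) ℂ} {T : ℝ → ℝ → Matrix (Fin n) (Fin n) ℂ}
  {P : ℝ → Matrix (Fin n) (Fin n) ℂ} {g : ℝ → Fin n → ℂ} {K μ Cg : ℝ}

/-- `T x y` is the evolution operator from time `y` to time `x` of `φ' = A(x)φ`. -/
structure IsEvolutionOperator (A : ℝ → Matrix (Fin n) (Fin n) ℂ)
    (T : ℝ → ℝ → Matrix (Fin n) (Fin n) ℂ) : Prop where
  apply_self : ∀ y, T y y = 1
  mul_apply : ∀ x y z, T x y * T y z = T x z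
  hasDerivAt_mulVec : ∀ y x v, HasDerivAt (fun s => T s y *ᵥ v) (A x *ᵥ (T x y *ᵥ v)) x

structure HasExpDichotomy (T : ℝ → ℝ → Matrix (Fin n) (Fin n) ℂ)
    (P : ℝ → Matrix (Fin n) (Fin n) ℂ) (K μ : ℝ) : Prop where
  commute : ∀ x y, P x * T x y = T x y * P y
  stable_le : ∀ x y, y ≤ x → matOpNorm (T x y * P y) ≤ K * exp (-μ * (x - y))
  unstable_le : ∀ x y, x ≤ y → matOpNorm (T x y * (1 - P y)) ≤ K * exp (-μ * (y - x))

/-- The variation-of-constants formula `φ`. -/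
noncomputable def greenSolution (T : ℝ → ℝ → Matrix (Fin n) (Fin n) ℂ)
    (P : ℝ → Matrix (Fin n) (Fin n) ℂ) (g : ℝ → Fin n → ℂ) (x : ℝ) : Fin n → ℂ :=
  (∫ y in Iic x, (T x y * P y) *ᵥ g y) - ∫ y in Ici x, (T x y * (1 - P y)) *ᵥ g y

namespace IsEvolutionOperator

variable (hT : IsEvolutionOperator A T)
include hT

theorem mul_swap (x y : ℝ) : T x y * T y x = 1 := by rw [hT.mul_apply, hT.apply_self]

theorem continuous_left (y : ℝ) : Continuous fun s => T s y :=
  continuous_of_forall_hasDerivAt_mulVec fun x v => by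
    simpa only [mulVec_mulVec] using hT.hasDerivAt_mulVec y x v

theorem continuous_right (x : ℝ) : Continuous fun s => T x s :=
  (hT.continuous_left x).matrix_inverse_of_mul_eq_one (hT.mul_swap x)

theorem hasDerivAt_mulVec_of_hasDerivAt (y : ℝ) {v : ℝ → Fin n → ℂ} {v' : Fin n → ℂ} {x : ℝ}
    (hv : HasDerivAt v v' x) :
    HasDerivAt (fun t => T t y *ᵥ v t) (A x *ᵥ (T x y *ᵥ v x) + T x y *ᵥ v') x := by
  simpa only [mulVec_mulVec] using hasDerivAt_mulVec_of_forall
    (fun w => by simpa only [mulVec_mulVec] using hT.hasDerivAt_mulVec y x w) hv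

theorem eq_mulVec_of_hasDerivAt {CA : ℝ} (hCA : ∀ x, matOpNorm (A x) ≤ CA)
    {δ : ℝ → Fin n → ℂ} (hδ : ∀ t, HasDerivAt δ (A t *ᵥ δ t) t) (x y : ℝ) :
    δ x = T x y *ᵥ δ y :=
  congrFun (ODE_solution_unique_univ (v := fun t v => A t *ᵥ v) (s := fun _ => univ)
    (fun t => (lipschitzWith_mulVec (hCA t)).lipschitzOnWith) (fun t => ⟨hδ t, trivial⟩)
    (fun t => ⟨hT.hasDerivAt_mulVec y t (δ y), trivial⟩)
    (by rw [hT.apply_self, one_mulVec])) x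

end IsEvolutionOperator

namespace HasExpDichotomy

variable (hD : HasExpDichotomy T P K μ)
include hD

theorem continuous_projection (hT : IsEvolutionOperator A T) : Continuous P := by
  have hP : P = fun s => T s 0 * P 0 * T 0 s := funext fun s => by
    rw [← hD.commute, mul_assoc, hT.mul_swap, mul_one]
  rw [hP]
  exact ((hT.continuous_left 0).matrix_mul continuous_const).matrix_mul (hT.continuous_right 0)

theorem continuous_stable (hT : IsEvolutionOperator A T) (hg : Continuous g) (z : ℝ) :
    Continuous fun y => (T z y * P y) *ᵥ g y :=
  ((hT.continuous_right z).matrix_mul (hD.continuous_projection hT)).matrix_mulVec hg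

theorem continuous_unstable (hT : IsEvolutionOperator A T) (hg : Continuous g) (z : ℝ) :
    Continuous fun y => (T z y * (1 - P y)) *ᵥ g y :=
  ((hT.continuous_right z).matrix_mul
    (continuous_const.sub (hD.continuous_projection hT))).matrix_mulVec hg

theorem one_sub_commute (x y : ℝ) : (1 - P x) * T x y = T x y * (1 - P y) := by
  rw [Matrix.sub_mul, Matrix.mul_sub, one_mul, mul_one, hD.commute]

theorem norm_stable_mulVec_le {x y : ℝ} (hyx : y ≤ x) (v : Fin n → ℂ) :
    ‖(T x y * P y) *ᵥ v‖ ≤ K * (exp (-μ * |x - y|) * ‖v‖) := by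
  rw [abs_of_nonneg (sub_nonneg.2 hyx), ← mul_assoc]
  exact norm_mulVec_le_of_le (hD.stable_le x y hyx) le_rfl

theorem norm_unstable_mulVec_le {x y : ℝ} (hxy : x ≤ y) (v : Fin n → ℂ) :
    ‖(T x y * (1 - P y)) *ᵥ v‖ ≤ K * (exp (-μ * |x - y|) * ‖v‖) := by
  rw [abs_sub_comm, abs_of_nonneg (sub_nonneg.2 hxy), ← mul_assoc]
  exact norm_mulVec_le_of_le (hD.unstable_le x y hxy) le_rfl

theorem eq_zero_of_orbit_bounded (hμ : 0 < μ) {δ : ℝ → Fin n → ℂ}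
    (horbit : ∀ x y, δ x = T x y *ᵥ δ y) {C : ℝ} (hC : ∀ x, ‖δ x‖ ≤ C) : δ = 0 := by
  funext x
  have hs : P x *ᵥ δ x = 0 := eq_zero_of_norm_le_mul_exp hμ (C := K * C) fun t ht => by
    rw [horbit x (x - t), mulVec_mulVec, hD.commute]
    exact (norm_mulVec_le_of_le (hD.stable_le x (x - t) (by linarith)) (hC _)).trans_eq
      (by rw [sub_sub_cancel]; ring)
  have hu : (1 - P x) *ᵥ δ x = 0 := eq_zero_of_norm_le_mul_exp hμ (C := K * C) fun t ht => by
    rw [horbit x (x + t), mulVec_mulVec, hD.one_sub_commute]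
    exact (norm_mulVec_le_of_le (hD.unstable_le x (x + t) (by linarith)) (hC _)).trans_eq
      (by rw [add_sub_cancel_left]; ring)
  rw [Pi.zero_apply, ← one_mulVec (δ x), ← add_sub_cancel (P x) 1, add_mulVec, hs, hu, add_zero]

theorem norm_greenSolution_le (hμ : 0 < μ) (hg : Continuous g) (hCg : ∀ y, ‖g y‖ ≤ Cg)
    (x : ℝ) :
    ‖greenSolution T P g x‖ ≤ K * ∫ y, exp (-μ * |x - y|) * ‖g y‖ := by
  have hw := (integrable_exp_neg_mul_abs_sub_mul_norm hμ hg hCg x).const_mul K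
  have hs : ‖∫ y in Iic x, (T x y * P y) *ᵥ g y‖
      ≤ ∫ y in Iic x, K * (exp (-μ * |x - y|) * ‖g y‖) :=
    norm_integral_le_of_norm_le hw.integrableOn
      (ae_restrict_of_forall_mem measurableSet_Iic fun y hy => hD.norm_stable_mulVec_le hy _)
  have hu : ‖∫ y in Ici x, (T x y * (1 - P y)) *ᵥ g y‖
      ≤ ∫ y in Ioi x, K * (exp (-μ * |x - y|) * ‖g y‖) := by
    rw [← integral_Ici_eq_integral_Ioi]
    exact norm_integral_le_of_norm_le hw.integrableOn
      (ae_restrict_of_forall_mem measurableSet_Ici fun y hy => hD.norm_unstable_mulVec_le hy _)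
  calc ‖greenSolution T P g x‖
      ≤ (∫ y in Iic x, K * (exp (-μ * |x - y|) * ‖g y‖))
        + ∫ y in Ioi x, K * (exp (-μ * |x - y|) * ‖g y‖) :=
        (norm_sub_le _ _).trans (add_le_add hs hu)
    _ = K * ∫ y, exp (-μ * |x - y|) * ‖g y‖ := by
        rw [intervalIntegral.integral_Iic_add_Ioi hw.integrableOn hw.integrableOn,
          integral_const_mul]

variable (hT : IsEvolutionOperator A T) (hμ : 0 < μ) (hg : Continuous g) (hCg : ∀ y, ‖g y‖ ≤ Cg)
include hT hμ hg hCg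

theorem integrableOn_stable (z x : ℝ) :
    IntegrableOn (fun y => (T z y * P y) *ᵥ g y) (Iic x) := by
  have hx : IntegrableOn (fun y => (T x y * P y) *ᵥ g y) (Iic x) := by
    refine ((integrable_exp_neg_mul_abs_sub_mul_norm hμ hg hCg x).const_mul K).integrableOn.mono'
      (hD.continuous_stable hT hg x).aestronglyMeasurable ?_
    exact (ae_restrict_iff' measurableSet_Iic).2
      (Eventually.of_forall fun y hy => hD.norm_stable_mulVec_le hy (g y))
  have hz : (fun y => (T z y * P y) *ᵥ g y) = fun y => T z x *ᵥ ((T x y * P y) *ᵥ g y) :=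
    funext fun y => by rw [mulVec_mulVec, ← mul_assoc, hT.mul_apply]
  rw [hz]
  exact (T z x).integrable_mulVec hx

theorem integrableOn_unstable (z x : ℝ) :
    IntegrableOn (fun y => (T z y * (1 - P y)) *ᵥ g y : ℝ → Fin n → ℂ) (Ici x) := by
  have hx : IntegrableOn (fun y => (T x y * (1 - P y)) *ᵥ g y : ℝ → Fin n → ℂ) (Ici x) := by
    refine ((integrable_exp_neg_mul_abs_sub_mul_norm hμ hg hCg x).const_mul K).integrableOn.mono'
      (hD.continuous_unstable hT hg x).aestronglyMeasurable ?_
    exact (ae_restrict_iff' measurableSet_Ici).2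
      (Eventually.of_forall fun y hy => hD.norm_unstable_mulVec_le hy (g y))
  have hz : (fun y => (T z y * (1 - P y)) *ᵥ g y)
      = fun y => T z x *ᵥ ((T x y * (1 - P y)) *ᵥ g y) :=
    funext fun y => by rw [mulVec_mulVec, ← mul_assoc, hT.mul_apply]
  rw [hz]
  exact (T z x).integrable_mulVec hx

theorem greenSolution_eq_mulVec (z x : ℝ) :
    greenSolution T P g x = T x z *ᵥ ((∫ y in Iic x, (T z y * P y) *ᵥ g y)
      - ∫ y in Ici x, (T z y * (1 - P y)) *ᵥ g y) := by
  rw [mulVec_sub, mulVec_integral _ (hD.integrableOn_stable hT hμ hg hCg z x),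
    mulVec_integral _ (hD.integrableOn_unstable hT hμ hg hCg z x)]
  simp only [greenSolution, mulVec_mulVec, ← mul_assoc, hT.mul_apply]

theorem hasDerivAt_greenSolution (x : ℝ) :
    HasDerivAt (greenSolution T P g) (A x *ᵥ greenSolution T P g x + g x) x := by
  have hF := (hasDerivAt_integral_Iic (hD.continuous_stable hT hg 0)
    (hD.integrableOn_stable hT hμ hg hCg 0) x).fun_sub (hasDerivAt_integral_Ici
      (hD.continuous_unstable hT hg 0) (hD.integrableOn_unstable hT hμ hg hCg 0) x)
  rw [funext (hD.greenSolution_eq_mulVec hT hμ hg hCg 0)]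
  convert hT.hasDerivAt_mulVec_of_hasDerivAt 0 hF using 2
  rw [sub_neg_eq_add, ← add_mulVec, ← mul_add, add_sub_cancel, mul_one, mulVec_mulVec,
    hT.mul_swap, one_mulVec]

end HasExpDichotomy

theorem dichotomy_inhomogeneous_solution_general (n : ℕ)
    (A : ℝ → Matrix (Fin n) (Fin n) ℂ)
    (CA : ℝ) (hCA : ∀ x, matOpNorm (A x) ≤ CA)
    (g : ℝ → Fin n → ℂ) (hgcont : Continuous g) (Cg : ℝ) (hCg : ∀ x, ‖g x‖ ≤ Cg)
    (T : ℝ → ℝ → Matrix (Fin n) (Fin n) ℂ)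
    (hTid : ∀ y, T y y = 1)
    (hTcoc : ∀ x y z, T x y * T y z = T x z)
    (hTode : ∀ y x (v : Fin n → ℂ),
      HasDerivAt (fun s => (T s y).mulVec v) ((A x).mulVec ((T x y).mulVec v)) x)
    (K μ : ℝ) (hK : 0 < K) (hμ : 0 < μ)
    (P : ℝ → Matrix (Fin n) (Fin n) ℂ)
    (hPcomm : ∀ x y, P x * T x y = T x y * P y)
    (hPs : ∀ x y, y ≤ x → matOpNorm (T x y * P y) ≤ K * Real.exp (-μ * (x - y)))
    (hPu : ∀ x y, x ≤ y → matOpNorm (T x y * (1 - P y)) ≤ K * Real.exp (-μ * (y - x))) :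
    let φ : ℝ → Fin n → ℂ := fun x =>
      (∫ y in Set.Iic x, (T x y * P y).mulVec (g y)) -
        ∫ y in Set.Ici x, (T x y * (1 - P y)).mulVec (g y)
    (∀ x, HasDerivAt φ ((A x).mulVec (φ x) + g x) x) ∧
    (∃ C : ℝ, ∀ x, ‖φ x‖ ≤ C) ∧
    (∀ x, ‖φ x‖ ≤ K * ∫ y : ℝ, Real.exp (-μ * |x - y|) * ‖g y‖) ∧
    (∀ ψ : ℝ → Fin n → ℂ,
      (∀ x, HasDerivAt ψ ((A x).mulVec (ψ x) + g x) x) →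
      (∃ C : ℝ, ∀ x, ‖ψ x‖ ≤ C) → ψ = φ) := by
  intro φ
  have hT : IsEvolutionOperator A T := ⟨hTid, hTcoc, hTode⟩
  have hD : HasExpDichotomy T P K μ := ⟨hPcomm, hPs, hPu⟩
  have hφ' : ∀ x, HasDerivAt φ (A x *ᵥ φ x + g x) x :=
    hD.hasDerivAt_greenSolution hT hμ hgcont hCg
  have hφ_le : ∀ x, ‖φ x‖ ≤ K * ∫ y, exp (-μ * |x - y|) * ‖g y‖ :=
    hD.norm_greenSolution_le hμ hgcont hCg
  have hφ_bdd : ∃ C : ℝ, ∀ x, ‖φ x‖ ≤ C :=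
    ⟨K * (Cg * ∫ t, exp (-μ * |t|)), fun x => (hφ_le x).trans <|
      mul_le_mul_of_nonneg_left (integral_exp_neg_mul_abs_sub_mul_norm_le hμ hgcont hCg x) hK.le⟩
  refine ⟨hφ', hφ_bdd, hφ_le, fun ψ hψ ⟨Cψ, hCψ⟩ => ?_⟩
  obtain ⟨Cφ, hCφ⟩ := hφ_bdd
  have hδ : ∀ t, HasDerivAt (ψ - φ) (A t *ᵥ (ψ - φ) t) t := fun t => by
    simpa only [Pi.sub_apply, mulVec_sub, add_sub_add_right_eq_sub] using (hψ t).sub (hφ' t)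
  have hδ_le : ∀ t, ‖(ψ - φ) t‖ ≤ Cψ + Cφ := fun t =>
    (norm_sub_le _ _).trans (add_le_add (hCψ t) (hCφ t))
  exact sub_eq_zero.1 (hD.eq_zero_of_orbit_bounded hμ (hT.eq_mulVec_of_hasDerivAt hCA hδ) hδ_le)

/-- Variation-of-constants: if `φ' = A(x)φ` has an exponential dichotomy on `ℝ` with
constants `K, μ` and projections `P(x)`, `A` is continuous and bounded and `g` is continuous
and bounded, then `φ(x) = ∫_{−∞}^x T(x,y)P(y)g(y) dy − ∫_x^∞ T(x,y)(I−P(y))g(y) dy` is the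
unique bounded `C¹` solution of `φ' = A(x)φ + g(x)`, and it satisfies the pointwise bound
`‖φ(x)‖ ≤ K ∫_ℝ e^{−μ|x−y|} ‖g(y)‖ dy`. -/
theorem dichotomy_inhomogeneous_solution (n : ℕ)
    (A : ℝ → Matrix (Fin n) (Fin n) ℂ)
    (hAcont : ∀ i j, Continuous fun x => A x i j)
    (CA : ℝ) (hCA : ∀ x, matOpNorm (A x) ≤ CA)
    (g : ℝ → Fin n → ℂ) (hgcont : Continuous g) (Cg : ℝ) (hCg : ∀ x, ‖g x‖ ≤ Cg)
    (T : ℝ → ℝ → Matrix (Fin n) (Fin n) ℂ)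
    (hTid : ∀ y, T y y = 1)
    (hTcoc : ∀ x y z, T x y * T y z = T x z)
    (hTode : ∀ y x (v : Fin n → ℂ),
      HasDerivAt (fun s => (T s y).mulVec v) ((A x).mulVec ((T x y).mulVec v)) x)
    (K μ : ℝ) (hK : 0 < K) (hμ : 0 < μ)
    (P : ℝ → Matrix (Fin n) (Fin n) ℂ)
    (hPproj : ∀ x, P x * P x = P x)
    (hPcomm : ∀ x y, P x * T x y = T x y * P y)
    (hPs : ∀ x y, y ≤ x → matOpNorm (T x y * P y) ≤ K * Real.exp (-μ * (x - y)))
    (hPu : ∀ x y, x ≤ y → matOpNorm (T x y * (1 - P y)) ≤ K * Real.exp (-μ * (y - x))) :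
    let φ : ℝ → Fin n → ℂ := fun x =>
      (∫ y in Set.Iic x, (T x y * P y).mulVec (g y)) -
        ∫ y in Set.Ici x, (T x y * (1 - P y)).mulVec (g y)
    (∀ x, HasDerivAt φ ((A x).mulVec (φ x) + g x) x) ∧
    (∃ C : ℝ, ∀ x, ‖φ x‖ ≤ C) ∧
    (∀ x, ‖φ x‖ ≤ K * ∫ y : ℝ, Real.exp (-μ * |x - y|) * ‖g y‖) ∧
    (∀ ψ : ℝ → Fin n → ℂ,
      (∀ x, HasDerivAt ψ ((A x).mulVec (ψ x) + g x) x) →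
      (∃ C : ℝ, ∀ x, ‖ψ x‖ ≤ C) → ψ = φ) :=
  dichotomy_inhomogeneous_solution_general n A CA hCA g hgcont Cg hCg T hTid hTcoc hTode K μ hK hμ P
    hPcomm hPs hPu
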